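/- arXiv:2605.18555 — 4 statements merged into one kernel-verified Lean document; each statement's English description precedes it below -/
import Mathlib

section
/- Let Q be an odd prime not dividing a^2 - 1, let D = a^2 - 1, ε the Legendre symbol (D/Q), and δ the Legendre symbol (2(a+1)/Q). Then in Z[√D]/(Q) one has ω_a^{(Q - ε)/2} ≡ δ, where ω_a = a + √D. -/
/-! Put `α = (a + 1) + √D`, so that `α² = 2(a + 1) ω_a` and `α ᾱ = 2(a + 1)`. Modulo `Q`
the Frobenius sends `α` to `(a + 1) + ε √D`, that is to `α` or to `ᾱ`; hence `α ^ (Q - 1) = 1`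
when `ε = 1` and `α ^ (Q + 1) = 2(a + 1)` when `ε = -1`. Expanding the even power of `α` with
`α² = 2(a + 1) ω_a` and using Euler's criterion `(2(a + 1)) ^ ((Q - 1) / 2) ≡ δ`, both cases
give `δ ω_a ^ ((Q - ε) / 2) ≡ 1`, and `δ² = 1`. -/

theorem Zsqrtd.isUnit_natCast_iff {d : ℤ} {n : ℕ} : IsUnit (n : ℤ√d) ↔ n = 1 := by
  refine ⟨fun hn => ?_, fun hn => by simp [hn]⟩
  have hdvd : ((n : ℤ) : ℤ√d) ∣ ((1 : ℤ) : ℤ√d) := by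
    simpa using isUnit_iff_dvd_one.mp hn
  rw [Zsqrtd.intCast_dvd_intCast] at hdvd
  exact_mod_cast Int.eq_one_of_dvd_one (by simp) hdvd

theorem Int.isCoprime_two_mul_add_one {a : ℤ} {p : ℕ} (hp : Odd p)
    (ha : IsCoprime (a ^ 2 - 1) (p : ℤ)) : IsCoprime (2 * (a + 1)) (p : ℤ) := by
  have h2 : IsCoprime (2 : ℤ) (p : ℤ) :=
    Nat.isCoprime_iff_coprime.mpr (Nat.coprime_two_left.mpr hp)
  have hfac : a ^ 2 - 1 = (a + 1) * (a - 1) := by ring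
  exact h2.mul_left (hfac ▸ ha : IsCoprime ((a + 1) * (a - 1)) (p : ℤ)).of_mul_left_left

section Conjugate

variable {R : Type*} [CommRing R] {a : ℤ} {s : R}

theorem intCast_add_one_add_sq (hs : s * s = ((a ^ 2 - 1 : ℤ) : R)) :
    (((a + 1 : ℤ) : R) + s) ^ 2 = ((2 * (a + 1) : ℤ) : R) * (a + s) := by
  push_cast at hs ⊢
  linear_combination hs

theorem intCast_add_one_add_mul_sub (hs : s * s = ((a ^ 2 - 1 : ℤ) : R)) :
    (((a + 1 : ℤ) : R) + s) * (((a + 1 : ℤ) : R) - s) = ((2 * (a + 1) : ℤ) : R) := by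
  push_cast at hs ⊢
  linear_combination -hs

end Conjugate

section CharP

variable {R : Type*} [CommRing R] {p : ℕ} [CharP R p]

theorem isUnit_intCast_of_isCoprime {x : ℤ} (hx : IsCoprime x (p : ℤ)) : IsUnit (x : R) := by
  obtain ⟨u, v, huv⟩ := hx
  refine .of_mul_eq_one_right (u : R) ?_
  simpa using congrArg (Int.cast : ℤ → R) huv

variable [Fact p.Prime]

theorem intCast_pow_char (x : ℤ) : (x : R) ^ p = x := by
  rw [← map_intCast (ZMod.castHom dvd_rfl R), ← map_pow, ZMod.pow_card]

theorem intCast_pow_div_two (x : ℤ) : (x : R) ^ (p / 2) = legendreSym p x := by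
  rw [← map_intCast (ZMod.castHom dvd_rfl R), ← map_pow, ← legendreSym.eq_pow, map_intCast]

theorem intCast_add_pow_char_of_mul_self_eq (hp : Odd p) (x : ℤ) {s : R} {d : ℤ}
    (hs : s * s = d) : ((x : R) + s) ^ p = x + legendreSym p d * s := by
  obtain ⟨k, rfl⟩ := hp
  have hk : (2 * k + 1) / 2 = k := by omega
  rw [add_pow_char, intCast_pow_char, ← intCast_pow_div_two, hk, ← hs, pow_succ, pow_mul, sq]

variable {a : ℤ} {s : R}

theorem mul_pow_div_two_eq_one_of_legendreSym_eq_one (hp : Odd p)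
    (ha : IsCoprime (a ^ 2 - 1) (p : ℤ)) (hs : s * s = ((a ^ 2 - 1 : ℤ) : R))
    (hε : legendreSym p (a ^ 2 - 1) = 1) :
    ((2 * (a + 1) : ℤ) : R) ^ (p / 2) * ((a : R) + s) ^ (p / 2) = 1 := by
  set α := ((a + 1 : ℤ) : R) + s
  have hα : IsUnit α := isUnit_of_mul_isUnit_left <| (intCast_add_one_add_mul_sub hs).symm ▸
    isUnit_intCast_of_isCoprime (Int.isCoprime_two_mul_add_one hp ha)
  have hfrob : α ^ p = α := by
    rw [intCast_add_pow_char_of_mul_self_eq hp _ hs, hε, Int.cast_one, one_mul]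
  have hp2 : p = 2 * (p / 2) + 1 := by obtain ⟨k, rfl⟩ := hp; omega
  rw [← mul_pow, ← intCast_add_one_add_sq hs, ← pow_mul]
  refine hα.mul_left_cancel ?_
  rw [mul_one, ← pow_succ', ← hp2, hfrob]

theorem mul_pow_div_two_add_one_eq_one_of_legendreSym_eq_neg_one (hp : Odd p)
    (ha : IsCoprime (a ^ 2 - 1) (p : ℤ)) (hs : s * s = ((a ^ 2 - 1 : ℤ) : R))
    (hε : legendreSym p (a ^ 2 - 1) = -1) :
    ((2 * (a + 1) : ℤ) : R) ^ (p / 2) * ((a : R) + s) ^ (p / 2 + 1) = 1 := by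
  set c := ((2 * (a + 1) : ℤ) : R) with hc_def
  clear_value c
  have hc : IsUnit c :=
    hc_def ▸ isUnit_intCast_of_isCoprime (Int.isCoprime_two_mul_add_one hp ha)
  have hfrob : (((a + 1 : ℤ) : R) + s) ^ p = ((a + 1 : ℤ) : R) - s := by
    rw [intCast_add_pow_char_of_mul_self_eq hp _ hs, hε, Int.cast_neg, Int.cast_one, neg_one_mul,
      sub_eq_add_neg]
  have hp2 : p + 1 = 2 * (p / 2 + 1) := by obtain ⟨k, rfl⟩ := hp; omega
  refine hc.mul_left_cancel ?_
  calc c * (c ^ (p / 2) * ((a : R) + s) ^ (p / 2 + 1))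
      = (((a + 1 : ℤ) : R) + s) ^ (p + 1) := by
        rw [hp2, pow_mul, intCast_add_one_add_sq hs, ← hc_def, mul_pow]; ring
    _ = c * 1 := by
        rw [pow_succ, hfrob, mul_comm, intCast_add_one_add_mul_sub hs, hc_def, mul_one]

theorem intCast_add_pow_eq_legendreSym (hp : Odd p) (ha : IsCoprime (a ^ 2 - 1) (p : ℤ))
    (hs : s * s = ((a ^ 2 - 1 : ℤ) : R)) :
    ((a : R) + s) ^ (((p : ℤ) - legendreSym p (a ^ 2 - 1)).toNat / 2) =
      legendreSym p (2 * (a + 1)) := by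
  have hδ : (legendreSym p (2 * (a + 1)) : R) * legendreSym p (2 * (a + 1)) = 1 := by
    rw [← Int.cast_mul, ← sq, legendreSym.sq_one p
      (isUnit_intCast_of_isCoprime (Int.isCoprime_two_mul_add_one hp ha)).ne_zero, Int.cast_one]
  refine (left_inv_eq_right_inv hδ ?_).symm
  rw [← intCast_pow_div_two]
  obtain ⟨k, hk⟩ := id hp
  rcases legendreSym.eq_one_or_neg_one p (isUnit_intCast_of_isCoprime ha).ne_zero with hε | hε
  · rw [hε, show ((p : ℤ) - 1).toNat / 2 = p / 2 by omega]
    exact mul_pow_div_two_eq_one_of_legendreSym_eq_one hp ha hs hε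
  · rw [hε, show ((p : ℤ) - -1).toNat / 2 = p / 2 + 1 by omega]
    exact mul_pow_div_two_add_one_eq_one_of_legendreSym_eq_neg_one hp ha hs hε

end CharP

theorem chua_congruence (a : ℤ) (Q : ℕ) [Fact Q.Prime] (hodd : Odd Q)
    (hcop : IsCoprime (a ^ 2 - 1) (Q : ℤ)) :
    ((Q : Zsqrtd (a ^ 2 - 1))) ∣
      ((⟨a, 1⟩ : Zsqrtd (a ^ 2 - 1)) ^ (((Q : ℤ) - legendreSym Q (a ^ 2 - 1)).toNat / 2)
        - ((legendreSym Q (2 * (a + 1)) : ℤ) : Zsqrtd (a ^ 2 - 1))) := by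
  set π := Ideal.Quotient.mk (Ideal.span {(Q : ℤ√(a ^ 2 - 1))})
  have := CharP.quotient (ℤ√(a ^ 2 - 1)) Q fun h =>
    (Fact.out : Q.Prime).ne_one (Zsqrtd.isUnit_natCast_iff.mp h)
  have hs : π Zsqrtd.sqrtd * π Zsqrtd.sqrtd = ((a ^ 2 - 1 : ℤ) : _) := by
    rw [← map_mul, Zsqrtd.dmuld, map_intCast]
  have hω : π ⟨a, 1⟩ = a + π Zsqrtd.sqrtd := by
    rw [Zsqrtd.decompose, map_add, map_mul, map_intCast, map_intCast, Int.cast_one, mul_one]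
  rw [← Ideal.Quotient.eq_zero_iff_dvd, map_sub, map_pow, map_intCast, sub_eq_zero, hω]
  exact intCast_add_pow_eq_legendreSym hodd hcop hs
end

section
/- For every prime W_p = (2^p + 1)/3 with p an odd prime, one has ω^{(W_p + 1)/2} ≡ -1 (mod W_p) in Z[√2], where ω = 3 + 2√2. -/
set_option maxHeartbeats 1000000

theorem chua_wagstaff (p : ℕ) (hp : p.Prime) (hodd : Odd p)
    (hW : Nat.Prime ((2 ^ p + 1) / 3)) :
    (((2 ^ p + 1) / 3 : ℕ) : Zsqrtd 2) ∣
      ((3 + 2 * Zsqrtd.sqrtd) ^ (((2 ^ p + 1) / 3 + 1) / 2) + 1) := by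
  set W : ℕ := (2 ^ p + 1) / 3 with hWdef
  -- basic arithmetic on W
  have hp3 : 3 ≤ p := by
    rcases hodd with ⟨k, hk⟩
    have := hp.two_le
    omega
  have h3dvd : 3 ∣ 2 ^ p + 1 := by
    have h2 : (2 : ℤ) ^ p ≡ (-1) ^ p [ZMOD 3] := Int.ModEq.pow p (by decide)
    rw [hodd.neg_one_pow] at h2
    have h3 : (2 : ℤ) ^ p + 1 ≡ 0 [ZMOD 3] := by
      simpa using h2.add_right 1
    have : (3 : ℤ) ∣ (2 : ℤ) ^ p + 1 := (Int.modEq_zero_iff_dvd).mp h3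
    exact_mod_cast this
  have hW3 : 3 * W = 2 ^ p + 1 := Nat.mul_div_cancel' h3dvd
  have h8 : 8 ∣ 2 ^ p := by
    have : (2 : ℕ) ^ 3 ∣ 2 ^ p := pow_dvd_pow 2 hp3
    simpa using this
  have hW8 : W % 8 = 3 := by omega
  have hWodd : W % 2 = 1 := by omega
  have hW1 : 1 < W := by omega
  haveI : Fact W.Prime := ⟨hW⟩
  -- 2 is a nonresidue mod W, so 2 ^ (W/2) = -1 in ZMod W
  have hns : ¬ IsSquare (2 : ZMod W) := by
    rw [ZMod.exists_sq_eq_two_iff (by omega : W ≠ 2)]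
    omega
  have hleg : legendreSym W 2 = -1 := by
    rw [legendreSym.eq_neg_one_iff]
    simpa using hns
  have heuler : (2 : ZMod W) ^ (W / 2) = -1 := by
    have := (legendreSym.eq_pow W 2).symm
    rw [hleg] at this
    push_cast at this
    exact this
  -- move to the quotient ring
  set I : Ideal (Zsqrtd 2) := Ideal.span {((W : ℕ) : Zsqrtd 2)} with hI
  rw [← Ideal.Quotient.eq_zero_iff_dvd]
  haveI : CharP (Zsqrtd 2 ⧸ I) W := by
    constructor
    intro n
    have key : ((n : ℕ) : Zsqrtd 2 ⧸ I) = Ideal.Quotient.mk I ((n : ℕ) : Zsqrtd 2) := by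
      simp
    constructor
    · intro h
      rw [key, hI, Ideal.Quotient.eq_zero_iff_dvd] at h
      rw [show ((W : ℕ) : Zsqrtd 2) = ((W : ℤ) : Zsqrtd 2) from by push_cast; ring,
          show ((n : ℕ) : Zsqrtd 2) = ((n : ℤ) : Zsqrtd 2) from by push_cast; ring,
          Zsqrtd.intCast_dvd_intCast] at h
      exact Int.ofNat_dvd.mp h
    · intro h
      rw [key, hI, Ideal.Quotient.eq_zero_iff_dvd]
      exact Nat.cast_dvd_cast h
  set π : Zsqrtd 2 →+* (Zsqrtd 2 ⧸ I) := Ideal.Quotient.mk I with hπ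
  set s : Zsqrtd 2 ⧸ I := π Zsqrtd.sqrtd with hs
  have hs2 : s * s = 2 := by
    rw [hs, ← map_mul, Zsqrtd.dmuld, map_intCast]
    norm_num
  -- 2 ^ (W/2) = -1 in the quotient via the map from ZMod W
  have hpow2 : (2 : Zsqrtd 2 ⧸ I) ^ (W / 2) = -1 := by
    have h := congrArg (ZMod.castHom (dvd_refl W) (Zsqrtd 2 ⧸ I)) heuler
    rw [map_pow, map_neg, map_one, map_ofNat] at h
    exact h
  have hsW : s ^ W = -s := by
    have hWe : W = 2 * (W / 2) + 1 := by omega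
    calc s ^ W = s ^ (2 * (W / 2) + 1) := by conv_lhs => rw [hWe]
      _ = (s * s) ^ (W / 2) * s := by ring
      _ = (2 : Zsqrtd 2 ⧸ I) ^ (W / 2) * s := by rw [hs2]
      _ = -s := by rw [hpow2]; ring
  have hfrob : (1 + s) ^ W = 1 - s := by
    rw [add_pow_char (p := W), one_pow, hsW]
    ring
  -- the main computation
  have homega : π (3 + 2 * Zsqrtd.sqrtd) = (1 + s) ^ 2 := by
    have h1 : π (3 + 2 * Zsqrtd.sqrtd) = 3 + 2 * s := by
      have hπ2 : π 2 = 2 := map_ofNat π 2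
      have hπ3 : π 3 = 3 := map_ofNat π 3
      rw [map_add, map_mul, hπ2, hπ3]
    rw [h1]
    have h2 : (1 + s) ^ 2 = 1 + 2 * s + s * s := by ring
    rw [h2, hs2]
    ring
  have hWe2 : 2 * ((W + 1) / 2) = W + 1 := by omega
  have hmain : π ((3 + 2 * Zsqrtd.sqrtd) ^ ((W + 1) / 2) + 1) = 0 := by
    rw [map_add, map_pow, homega, ← pow_mul, hWe2, pow_succ, hfrob, map_one]
    have h3 : (1 - s) * (1 + s) = 1 - s * s := by ring
    rw [h3, hs2]
    ring
  exact hmain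
end

section
/- Let N > 1 be odd, and write N - 1 = F·R with F > 1, gcd(F, R) = 1, and F completely factored. Suppose for each prime q dividing F there is an integer a_q with a_q^{N-1} ≡ 1 (mod N) and gcd(a_q^{(N-1)/q} - 1, N) = 1. Then every prime divisor r of N satisfies r ≡ 1 (mod F). -/
theorem bls_key_lemma (N F R : ℕ) (hN : 1 < N) (hodd : Odd N)
    (hNF : N - 1 = F * R) (hF : 1 < F) (hcop : Nat.Coprime F R)
    (hw : ∀ q : ℕ, q.Prime → q ∣ F →
      ∃ a : ℤ, a ^ (N - 1) ≡ 1 [ZMOD N] ∧ IsCoprime (a ^ ((N - 1) / q) - 1) (N : ℤ)) :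
    ∀ r : ℕ, r.Prime → r ∣ N → r % F = 1 := by
  intro r hr hrN
  haveI : Fact r.Prime := ⟨hr⟩
  have hn0 : N - 1 ≠ 0 := by omega
  have hF0 : F ≠ 0 := by omega
  have hFn : F ∣ N - 1 := ⟨R, hNF⟩
  have hr2 : 2 ≤ r := hr.two_le
  have hr1 : r - 1 ≠ 0 := by omega
  have hrNZ : (r : ℤ) ∣ (N : ℤ) := Int.natCast_dvd_natCast.mpr hrN
  have key : ∀ q : ℕ, q.Prime → q ∣ F →
      (N - 1).factorization q ≤ (r - 1).factorization q := by
    intro q hq hqF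
    obtain ⟨a, ha1, ha2⟩ := hw q hq hqF
    have hqn : q ∣ N - 1 := hqF.trans hFn
    set b : ZMod r := (a : ZMod r) with hb
    have hb1 : b ^ (N - 1) = 1 := by
      have h1 : (N : ℤ) ∣ a ^ (N - 1) - 1 := Int.ModEq.dvd ha1.symm
      have h2 : (r : ℤ) ∣ a ^ (N - 1) - 1 := hrNZ.trans h1
      have h3 : ((a ^ (N - 1) - 1 : ℤ) : ZMod r) = 0 :=
        (ZMod.intCast_zmod_eq_zero_iff_dvd _ _).mpr h2
      push_cast at h3
      linear_combination h3
    have hb2 : b ^ ((N - 1) / q) ≠ 1 := by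
      intro h
      have h3 : ((a ^ ((N - 1) / q) - 1 : ℤ) : ZMod r) = 0 := by
        push_cast
        linear_combination h
      have h2 : (r : ℤ) ∣ a ^ ((N - 1) / q) - 1 :=
        (ZMod.intCast_zmod_eq_zero_iff_dvd _ _).mp h3
      obtain ⟨u, v, huv⟩ := ha2
      have : (r : ℤ) ∣ 1 := by
        rw [← huv]
        exact dvd_add (Dvd.dvd.mul_left h2 u) (Dvd.dvd.mul_left hrNZ v)
      have := Int.le_of_dvd one_pos this
      omega
    have hb0 : b ≠ 0 := by
      intro h
      rw [h, zero_pow hn0] at hb1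
      exact zero_ne_one hb1
    have hord1 : orderOf b ∣ N - 1 := orderOf_dvd_of_pow_eq_one hb1
    have hord2 : orderOf b ∣ r - 1 :=
      orderOf_dvd_of_pow_eq_one (ZMod.pow_card_sub_one_eq_one hb0)
    have hordpos : orderOf b ≠ 0 := by
      have := Nat.pos_of_dvd_of_pos hord2 (by omega)
      omega
    have hord3 : ¬ orderOf b ∣ (N - 1) / q := by
      intro h
      exact hb2 (orderOf_dvd_iff_pow_eq_one.mp h)
    have hstep : (N - 1).factorization q ≤ (orderOf b).factorization q := by
      by_contra hlt
      push_neg at hlt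
      apply hord3
      have hq0 : (N - 1) / q ≠ 0 := by
        have := Nat.div_pos (Nat.le_of_dvd (by omega) hqn) hq.pos
        omega
      rw [← Nat.factorization_le_iff_dvd hordpos hq0]
      intro p
      rw [Nat.factorization_div hqn]
      simp only [Finsupp.coe_tsub, Pi.sub_apply]
      by_cases hpq : p = q
      · subst hpq
        rw [hq.factorization_self]
        omega
      · rw [Nat.Prime.factorization hq, Finsupp.single_apply, if_neg (Ne.symm hpq)]
        have := (Nat.factorization_le_iff_dvd hordpos hn0).mpr hord1 p
        omega
    calc (N - 1).factorization q ≤ (orderOf b).factorization q := hstep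
      _ ≤ (r - 1).factorization q :=
        (Nat.factorization_le_iff_dvd hordpos hr1).mpr hord2 q
  have hFdvd : F ∣ r - 1 := by
    rw [← Nat.factorization_le_iff_dvd hF0 hr1]
    intro p
    by_cases hp : p.Prime
    · by_cases hpF : p ∣ F
      · calc F.factorization p ≤ (N - 1).factorization p :=
              (Nat.factorization_le_iff_dvd hF0 hn0).mpr hFn p
          _ ≤ (r - 1).factorization p := key p hp hpF
      · simp [Nat.factorization_eq_zero_of_not_dvd hpF]
    · simp [Nat.factorization_eq_zero_of_not_prime _ hp]
  obtain ⟨c, hc⟩ := hFdvd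
  have : r = F * c + 1 := by omega
  rw [this, Nat.mul_add_mod]
  exact Nat.mod_eq_of_lt hF
end

section
/- Let N > 1 be odd with N - 1 = F·R, gcd(F, R) = 1, and suppose every prime divisor of N is ≡ 1 (mod F). If F > √N, then N is prime. -/
theorem bls_sqrt_threshold (N F R : ℕ) (hN : 1 < N) (hodd : Odd N)
    (hNF : N - 1 = F * R) (hcop : Nat.Coprime F R)
    (hdiv : ∀ r : ℕ, r.Prime → r ∣ N → r % F = 1)
    (hbig : N < F * F) : N.Prime := by
  by_contra hnp
  have hp := Nat.minFac_prime (Nat.ne_of_gt hN)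
  set p := N.minFac with hpdef
  have h1 : p % F = 1 := hdiv p hp (Nat.minFac_dvd N)
  have hF2 : 2 ≤ F := by
    rcases Nat.lt_or_ge F 2 with h | h
    · interval_cases F <;> simp_all [Nat.mod_one]
    · exact h
  have hFp : F < p := by
    rcases lt_trichotomy p F with h | h | h
    · have : p % F = p := Nat.mod_eq_of_lt h
      have := hp.one_lt; omega
    · rw [h, Nat.mod_self] at h1; omega
    · exact h
  have hsq : p * p ≤ N := by
    have := Nat.minFac_sq_le_self (by omega) hnp
    simpa [pow_two] using this
  have : F * F < p * p := Nat.mul_lt_mul_of_lt_of_lt hFp hFp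
  omega
end
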